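/- Let a be a signed digit expansion of x ∈ ℝ and k ∈ ℕ be such that for every n > k not both a n and a (n+1) are nonzero. Then every x' ∈ ℝ with |x - x'| ≤ 2^(-k)/6 admits a signed digit expansion b with b n = a n for all n ≤ k and such that for every n > k+1 not both b n and b (n+1) are nonzero. -/

import Mathlib

/-- `a : ℤ → ℤ` is a signed digit expansion of the real number `x`. -/
def IsSignedDigitExpansion (a : ℤ → ℤ) (x : ℝ) : Prop :=
  (∀ n : ℤ, a n = -1 ∨ a n = 0 ∨ a n = 1) ∧
  (∃ N : ℕ, ∀ n : ℤ, n ≤ -(N : ℤ) → a n = 0) ∧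
  Summable (fun n : ℤ => (a n : ℝ) * (2 : ℝ) ^ (-n)) ∧
  x = ∑' n : ℤ, (a n : ℝ) * (2 : ℝ) ^ (-n)

/-! Split `x` at position `k` into the head `H`, made of the digits up to `k`, and the tail.
Digits in `{-1, 0, 1}` without two adjacent nonzero ones, starting at position `k + 1`, sum to at
most `(2/3)·2^(-k)` in absolute value (the extreme case is `0.1010…₂`), so
`|x' - H| ≤ (5/6)·2^(-k)`. After rescaling, `x' - H` is a number `y` with `|y| ≤ 5/6`, expanded
greedily: the digit is the nearest of `-1, 0, 1` with thresholds `±1/3`, and the remainder is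
doubled. From `|u| ≤ 5/6` the new remainder satisfies `|2u - d| ≤ 2/3`, and a nonzero digit taken
from a remainder with `1/3 < |u| ≤ 2/3` leaves `|2u - d| ≤ 1/3`, which forces the next digit to be
`0`. -/

namespace SignedDigit

open Finset

noncomputable def roundDigit (u : ℝ) : ℤ :=
  if 1 / 3 < u then 1 else if u < -(1 / 3) then -1 else 0

lemma abs_roundDigit_le_one (u : ℝ) : |roundDigit u| ≤ 1 := by
  unfold roundDigit; split_ifs <;> norm_num

lemma abs_two_mul_sub_roundDigit_le {u : ℝ} (hu : |u| ≤ 5 / 6) :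
    |2 * u - roundDigit u| ≤ 2 / 3 := by
  rw [abs_le] at hu ⊢
  unfold roundDigit; split_ifs <;> push_cast <;> constructor <;> linarith

lemma roundDigit_two_mul_sub_roundDigit {u : ℝ} (hu : |u| ≤ 2 / 3) (hd : roundDigit u ≠ 0) :
    roundDigit (2 * u - roundDigit u) = 0 := by
  rw [abs_le] at hu
  unfold roundDigit at hd ⊢
  split_ifs at hd ⊢ <;> push_cast at * <;> first | rfl | linarith

noncomputable def nafRemainder (y : ℝ) (m : ℕ) : ℝ :=
  (fun u ↦ 2 * u - roundDigit u)^[m] y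

noncomputable def nafDigit (y : ℝ) (m : ℕ) : ℤ :=
  roundDigit (nafRemainder y m)

lemma nafRemainder_succ (y : ℝ) (m : ℕ) :
    nafRemainder y (m + 1) = 2 * nafRemainder y m - nafDigit y m :=
  Function.iterate_succ_apply' _ _ _

lemma abs_nafRemainder_le {y : ℝ} (hy : |y| ≤ 5 / 6) (m : ℕ) : |nafRemainder y m| ≤ 5 / 6 := by
  induction m with
  | zero => exact hy
  | succ m ih =>
    rw [nafRemainder_succ]
    exact (abs_two_mul_sub_roundDigit_le ih).trans (by norm_num)

lemma nafDigit_nonAdjacent {y : ℝ} (hy : |y| ≤ 5 / 6) (m : ℕ) :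
    nafDigit y (m + 1) = 0 ∨ nafDigit y (m + 2) = 0 := by
  have hsmall : |nafRemainder y (m + 1)| ≤ 2 / 3 := by
    rw [nafRemainder_succ]; exact abs_two_mul_sub_roundDigit_le (abs_nafRemainder_le hy m)
  rw [or_iff_not_imp_left]
  intro hd
  rw [nafDigit, nafRemainder_succ]
  exact roundDigit_two_mul_sub_roundDigit hsmall hd

lemma sum_range_nafDigit (y : ℝ) (M : ℕ) :
    ∑ m ∈ range M, (nafDigit y m : ℝ) * (1 / 2) ^ (m + 1) = y - nafRemainder y M * (1 / 2) ^ M := by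
  induction M with
  | zero => simp [nafRemainder]
  | succ M ih => rw [sum_range_succ, ih, nafRemainder_succ]; ring

lemma summable_norm_digits {c : ℕ → ℤ} (hc : ∀ m, |c m| ≤ 1) :
    Summable fun m ↦ ‖(c m : ℝ) * (1 / 2) ^ (m + 1)‖ := by
  refine Summable.of_nonneg_of_le (fun _ ↦ norm_nonneg _) (fun m ↦ ?_)
    ((summable_geometric_two).mul_left (1 / 2))
  have : |(c m : ℝ)| ≤ 1 := by exact_mod_cast hc m
  rw [norm_mul, norm_pow, Real.norm_eq_abs, Real.norm_eq_abs,
    abs_of_pos (by norm_num : (0 : ℝ) < 1 / 2), pow_succ]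
  nlinarith [pow_pos (by norm_num : (0 : ℝ) < 1 / 2) m]

lemma hasSum_nafDigit {y : ℝ} (hy : |y| ≤ 5 / 6) :
    HasSum (fun m ↦ (nafDigit y m : ℝ) * (1 / 2) ^ (m + 1)) y := by
  rw [hasSum_iff_tendsto_nat_of_summable_norm
    (summable_norm_digits (c := nafDigit y) fun m ↦ abs_roundDigit_le_one _)]
  simp only [sum_range_nafDigit]
  have hrem :
      Filter.Tendsto (fun M ↦ nafRemainder y M * (1 / 2 : ℝ) ^ M) Filter.atTop (nhds 0) := by
    have hgeom := (tendsto_pow_atTop_nhds_zero_of_lt_one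
      (by norm_num : (0 : ℝ) ≤ 1 / 2) (by norm_num)).const_mul (5 / 6 : ℝ)
    rw [mul_zero] at hgeom
    refine squeeze_zero_norm (fun M ↦ ?_) hgeom
    rw [norm_mul, norm_pow, Real.norm_eq_abs, Real.norm_eq_abs,
      abs_of_pos (by norm_num : (0 : ℝ) < 1 / 2)]
    exact mul_le_mul_of_nonneg_right (abs_nafRemainder_le hy M) (by positivity)
  simpa using tendsto_const_nhds.sub hrem

lemma sum_range_succ_digits (c : ℕ → ℤ) (n : ℕ) :
    ∑ m ∈ range (n + 1), (c m : ℝ) * (1 / 2) ^ (m + 1)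
      = (c 0 + ∑ m ∈ range n, (c (m + 1) : ℝ) * (1 / 2) ^ (m + 1)) / 2 := by
  rw [sum_range_succ', add_div, sum_div, add_comm]
  congr 1
  · ring
  · refine sum_congr rfl fun m _ ↦ ?_
    ring

lemma abs_sum_range_le_of_nonAdjacent (n : ℕ) (c : ℕ → ℤ) (hc : ∀ m, |c m| ≤ 1)
    (hna : ∀ m, c m = 0 ∨ c (m + 1) = 0) :
    |∑ m ∈ range n, (c m : ℝ) * (1 / 2) ^ (m + 1)| ≤ 2 / 3 := by
  induction n using Nat.strong_induction_on generalizing c with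
  | _ n ih =>
    have hc₀ : |(c 0 : ℝ)| ≤ 1 := by exact_mod_cast hc 0
    match n, hna 0 with
    | 0, _ => norm_num
    | n + 1, .inl h₀ =>
      have := ih n (by omega) (fun m ↦ c (m + 1)) (fun m ↦ hc _) (fun m ↦ hna _)
      rw [sum_range_succ_digits, h₀, abs_le] at *
      push_cast
      constructor <;> linarith
    | 1, .inr _ =>
      rw [sum_range_succ_digits, abs_le] at *
      simp only [range_zero, sum_empty, add_zero]
      constructor <;> linarith
    | n + 2, .inr h₁ =>
      have := ih n (by omega) (fun m ↦ c (m + 2)) (fun m ↦ hc _) (fun m ↦ hna _)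
      rw [sum_range_succ_digits, sum_range_succ_digits, h₁, abs_le] at *
      push_cast
      constructor <;> linarith

lemma abs_le_of_hasSum_nonAdjacent {c : ℕ → ℤ} (hc : ∀ m, |c m| ≤ 1)
    (hna : ∀ m, c m = 0 ∨ c (m + 1) = 0) {s : ℝ}
    (hs : HasSum (fun m ↦ (c m : ℝ) * (1 / 2) ^ (m + 1)) s) : |s| ≤ 2 / 3 :=
  le_of_tendsto' ((continuous_abs.tendsto s).comp hs.tendsto_sum_nat)
    fun n ↦ abs_sum_range_le_of_nonAdjacent n c hc hna

lemma zpow_neg_add_one_add_natCast (k : ℤ) (m : ℕ) :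
    (2 : ℝ) ^ (-(k + 1 + m)) = 2 ^ (-k) * (1 / 2) ^ (m + 1) := by
  rw [show -(k + 1 + m) = -k + -((m + 1 : ℕ) : ℤ) by push_cast; ring, zpow_add₀ two_ne_zero,
    zpow_neg _ ((m + 1 : ℕ) : ℤ), zpow_natCast, one_div, inv_pow]

lemma hasSum_iff_hasSum_shift {t : ℤ → ℤ} {k : ℤ} (ht : ∀ n ≤ k, t n = 0) {s : ℝ} :
    HasSum (fun n ↦ (t n : ℝ) * 2 ^ (-n)) s ↔
      HasSum (fun m : ℕ ↦ (t (k + 1 + m) : ℝ) * (1 / 2) ^ (m + 1)) (2 ^ k * s) := by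
  have hshift : Function.Injective fun m : ℕ ↦ k + 1 + m := fun m m' h ↦ by simpa using h
  have hout : ∀ n ∉ Set.range fun m : ℕ ↦ k + 1 + m, (t n : ℝ) * 2 ^ (-n) = 0 := by
    intro n hn
    have : n ≤ k := by
      by_contra h
      exact hn ⟨(n - k - 1).toNat, by simp only; omega⟩
    simp [ht n this]
  have hterm : (fun n ↦ (t n : ℝ) * 2 ^ (-n)) ∘ (fun m : ℕ ↦ k + 1 + m)
      = fun m : ℕ ↦ 2 ^ (-k) * ((t (k + 1 + m) : ℝ) * (1 / 2) ^ (m + 1)) := by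
    ext m
    simp only [Function.comp_apply, zpow_neg_add_one_add_natCast]
    ring
  have hs : s = 2 ^ (-k) * (2 ^ k * s) := by
    rw [zpow_neg, inv_mul_cancel_left₀ (by positivity)]
  rw [← hshift.hasSum_iff hout, hterm]
  nth_rw 1 [hs]
  exact hasSum_mul_left_iff (by positivity)

lemma abs_le_of_hasSum_nonAdjacent_tail {t : ℤ → ℤ} {k : ℤ} (hc : ∀ n, |t n| ≤ 1)
    (hzero : ∀ n ≤ k, t n = 0) (hna : ∀ n, k < n → t n = 0 ∨ t (n + 1) = 0) {s : ℝ}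
    (hs : HasSum (fun n ↦ (t n : ℝ) * 2 ^ (-n)) s) : |s| ≤ 2 / 3 * 2 ^ (-k) := by
  have hbound := abs_le_of_hasSum_nonAdjacent (fun m ↦ hc _)
    (fun m ↦ by simpa [add_assoc] using hna (k + 1 + m) (by omega))
    ((hasSum_iff_hasSum_shift hzero).1 hs)
  rw [abs_mul, abs_of_pos (by positivity)] at hbound
  calc |s| = 2 ^ (-k) * (2 ^ k * |s|) := by rw [zpow_neg, inv_mul_cancel_left₀ (by positivity)]
    _ ≤ 2 ^ (-k) * (2 / 3) := by gcongr
    _ = 2 / 3 * 2 ^ (-k) := mul_comm _ _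

lemma exists_nonAdjacent_tail (k : ℤ) {y : ℝ} (hy : |y| ≤ 5 / 6 * 2 ^ (-k)) :
    ∃ t : ℤ → ℤ, (∀ n, |t n| ≤ 1) ∧ (∀ n ≤ k, t n = 0) ∧
      (∀ n, k + 1 < n → t n = 0 ∨ t (n + 1) = 0) ∧ HasSum (fun n ↦ (t n : ℝ) * 2 ^ (-n)) y := by
  have hz : |2 ^ k * y| ≤ 5 / 6 := by
    rw [abs_mul, abs_of_pos (by positivity)]
    calc 2 ^ k * |y| ≤ 2 ^ k * (5 / 6 * 2 ^ (-k)) := by gcongr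
      _ = 5 / 6 := by rw [mul_comm (5 / 6 : ℝ), zpow_neg, mul_inv_cancel_left₀ (by positivity)]
  let t : ℤ → ℤ := fun n ↦ if n ≤ k then 0 else nafDigit (2 ^ k * y) (n - k - 1).toNat
  have hzero : ∀ n ≤ k, t n = 0 := fun n hn ↦ if_pos hn
  have htail : ∀ m : ℕ, t (k + 1 + m) = nafDigit (2 ^ k * y) m := fun m ↦ by
    simp only [t, if_neg (show ¬k + 1 + (m : ℤ) ≤ k by omega)]
    congr 1
    omega
  refine ⟨t, fun n ↦ ?_, hzero, fun n hn ↦ ?_, ?_⟩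
  · by_cases hn : n ≤ k
    · simp [hzero n hn]
    · simp only [t, if_neg hn]; exact abs_roundDigit_le_one _
  · obtain ⟨m, rfl⟩ : ∃ m : ℕ, n = k + 1 + ((m + 1 : ℕ) : ℤ) := ⟨(n - k - 2).toNat, by omega⟩
    rw [htail, show k + 1 + ((m + 1 : ℕ) : ℤ) + 1 = k + 1 + ((m + 2 : ℕ) : ℤ) by push_cast; ring,
      htail]
    exact nafDigit_nonAdjacent hz m
  · rw [hasSum_iff_hasSum_shift hzero]
    simpa only [htail] using hasSum_nafDigit hz

lemma exists_hasSum_head_of_nonAdjacent {a : ℤ → ℤ} {k : ℤ} (ha : ∀ n, |a n| ≤ 1)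
    (hna : ∀ n, k < n → a n = 0 ∨ a (n + 1) = 0) {x : ℝ}
    (hx : HasSum (fun n ↦ (a n : ℝ) * 2 ^ (-n)) x) :
    ∃ T, |T| ≤ 2 / 3 * 2 ^ (-k) ∧
      HasSum (fun n ↦ ((if n ≤ k then a n else 0 : ℤ) : ℝ) * 2 ^ (-n)) (x - T) := by
  let tail : ℤ → ℤ := fun n ↦ if n ≤ k then 0 else a n
  have htail : (fun n ↦ (tail n : ℝ) * 2 ^ (-n))
      = {n | ¬n ≤ k}.indicator fun n ↦ (a n : ℝ) * 2 ^ (-n) := by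
    ext n
    by_cases hn : n ≤ k <;> simp [tail, hn, Set.indicator_apply]
  have htail_sum := (htail ▸ hx.summable.indicator _ :
    Summable fun n ↦ (tail n : ℝ) * 2 ^ (-n)).hasSum
  refine ⟨_, abs_le_of_hasSum_nonAdjacent_tail (fun n ↦ ?_) (fun n hn ↦ if_pos hn)
    (fun n hn ↦ ?_) htail_sum, ?_⟩
  · by_cases hn : n ≤ k <;> simp [hn, ha n]
  · simpa [tail, not_le.2 hn, show ¬n + 1 ≤ k by omega] using hna n hn
  · have hhead : ∀ n, (if n ≤ k then a n else 0) = a n - tail n := fun n ↦ by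
      by_cases hn : n ≤ k <;> simp [tail, hn]
    simp only [hhead, Int.cast_sub, sub_mul]
    exact hx.sub htail_sum

lemma isSignedDigitExpansion_iff {b : ℤ → ℤ} {x : ℝ} :
    IsSignedDigitExpansion b x ↔ (∀ n, |b n| ≤ 1) ∧ (∃ N : ℕ, ∀ n : ℤ, n ≤ -(N : ℤ) → b n = 0) ∧
      HasSum (fun n ↦ (b n : ℝ) * 2 ^ (-n)) x := by
  have hdigit : ∀ d : ℤ, |d| ≤ 1 ↔ d = -1 ∨ d = 0 ∨ d = 1 := fun d ↦ by
    rw [Int.abs_le_one_iff]; tauto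
  simp only [IsSignedDigitExpansion, hdigit]
  exact ⟨fun ⟨hd, hN, hs, hx⟩ ↦ ⟨hd, hN, hx ▸ hs.hasSum⟩,
    fun ⟨hd, hN, hs⟩ ↦ ⟨hd, hN, hs.summable, hs.tsum_eq.symm⟩⟩

end SignedDigit

open SignedDigit in
theorem signedDigit_perturbation_nonAdjacent (a : ℤ → ℤ) (x : ℝ) (k : ℕ)
    (ha : IsSignedDigitExpansion a x)
    (hna : ∀ n : ℤ, (k : ℤ) < n → a n = 0 ∨ a (n + 1) = 0) :
    ∀ x' : ℝ, |x - x'| ≤ (2 : ℝ) ^ (-(k : ℤ)) / 6 →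
      ∃ b : ℤ → ℤ, IsSignedDigitExpansion b x' ∧
        (∀ n : ℤ, n ≤ (k : ℤ) → b n = a n) ∧
        (∀ n : ℤ, (k : ℤ) + 1 < n → b n = 0 ∨ b (n + 1) = 0) := by
  intro x' hx'
  obtain ⟨ha_abs, ⟨N, ha_zero⟩, ha_sum⟩ := isSignedDigitExpansion_iff.1 ha
  obtain ⟨T, hT, hhead⟩ := exists_hasSum_head_of_nonAdjacent ha_abs hna ha_sum
  have hy : |x' - (x - T)| ≤ 5 / 6 * 2 ^ (-(k : ℤ)) := by
    rw [abs_le] at hT hx' ⊢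
    constructor <;> linarith
  obtain ⟨t, ht_abs, ht_zero, ht_na, ht_sum⟩ := exists_nonAdjacent_tail k hy
  have hb : ∀ n : ℤ, (if n ≤ k then a n else t n) = (if n ≤ k then a n else 0) + t n :=
    fun n ↦ by by_cases hn : n ≤ (k : ℤ) <;> simp [hn, ht_zero]
  refine ⟨fun n ↦ if n ≤ k then a n else t n, isSignedDigitExpansion_iff.2 ⟨fun n ↦ ?_,
    ⟨N, fun n hn ↦ ?_⟩, ?_⟩, fun n hn ↦ if_pos hn, fun n hn ↦ ?_⟩
  · split_ifs
    exacts [ha_abs n, ht_abs n]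
  · simp [show n ≤ k by omega, ha_zero n hn]
  · simp only [hb, Int.cast_add, add_mul]
    simpa only [add_sub_cancel] using hhead.add ht_sum
  · simpa [show ¬n ≤ k by omega, show ¬n + 1 ≤ k by omega] using ht_na n hn
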